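/- arXiv:1701.00275 — 5 statements merged into one kernel-verified Lean document; each statement's English description precedes it below -/
import Mathlib

section
/- Let K be a field of characteristic zero and n ≥ 1. In the planar Cremona group Cr₂(K), let s be the automorphism with s(x) = x + 1, s(y) = y, and a the automorphism with a(x) = x, a(y) = y + xⁿ. Then the subgroup Γₙ generated by s and a is nilpotent of nilpotency class exactly n + 1; in particular Γₙ is not nilpotent of class n. -/
open MvPolynomial

/-- The rational function field `K(X,Y)`, realized as the fraction field of the polynomial
ring in two variables. Its group of `K`-algebra automorphisms is the planar Cremona
group `Cr₂(K)`. -/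
noncomputable abbrev CremonaField (K : Type*) [Field K] : Type _ :=
  FractionRing (MvPolynomial (Fin 2) K)

/-- The image of the first variable in `K(X,Y)`. -/
noncomputable def genX (K : Type*) [Field K] : CremonaField K :=
  algebraMap (MvPolynomial (Fin 2) K) (CremonaField K) (X 0)

/-- The image of the second variable in `K(X,Y)`. -/
noncomputable def genY (K : Type*) [Field K] : CremonaField K :=
  algebraMap (MvPolynomial (Fin 2) K) (CremonaField K) (X 1)

/-!
Every element of `Γₙ` has the triangular form `(x, y) ↦ (x + c, y + p(x))` with `deg p ≤ n`.
The commutator of two such maps fixes `x` and adds to `y` a combination of differences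
`q(x + c) - q(x)`, which have smaller degree. Hence the term `γ (k + 1)` of the lower central
series (with `γ 0 = Γₙ`) consists of vertical maps `(x, y + p(x))` with `deg p < n - k`, and
`γ (n + 1)` is trivial. Conversely, the `n`-fold commutator `[s, [s, … [s, a]]]` is
`(x, y + Δⁿ xⁿ) = (x, y + n!)`, which is nontrivial in characteristic zero.
-/

open Polynomial

open scoped commutatorElement

namespace Subgroup

variable {G : Type*} [Group G]

theorem iterate_commutatorElement_mem_lowerCentralSeries {S : Subgroup G} {g h : G}
    (hg : g ∈ S) (hh : h ∈ S) (k : ℕ) : (⁅g, ·⁆)^[k] h ∈ S.lowerCentralSeries k := by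
  induction k with
  | zero => exact hh
  | succ k ih =>
    rw [Function.iterate_succ_apply', lowerCentralSeries_succ, commutator_comm]
    exact commutator_mem_commutator hg ih

theorem nilpotencyClass_eq_of_lowerCentralSeries {S : Subgroup G} {n : ℕ}
    (hbot : S.lowerCentralSeries (n + 1) = ⊥) (hne : S.lowerCentralSeries n ≠ ⊥) :
    ∃ _ : Group.IsNilpotent S, Group.nilpotencyClass S = n + 1 := by
  have hS : Group.IsNilpotent S := isNilpotent_of_lowerCentralSeries_eq_bot hbot
  refine ⟨hS, le_antisymm ?_ ?_⟩
  · apply lowerCentralSeries_eq_bot_iff_nilpotencyClass_le.mp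
    rw [← map_subtype_inj, map_bot, top_subtype_lowerCentralSeries, hbot]
  · by_contra! hlt
    exact hne (lowerCentralSeries_eq_bot_of_nilpotencyClass_le (Nat.le_of_lt_succ hlt))

end Subgroup

namespace Polynomial

theorem aeval_taylor {R A : Type*} [CommSemiring R] [Semiring A] [Algebra R A]
    (t : A) (r : R) (p : R[X]) :
    aeval t (taylor r p) = aeval (t + algebraMap R A r) p := by
  simp [taylor_apply, aeval_comp]

theorem taylor_sub_self_mem_degreeLT {R : Type*} [Ring R] {d : ℕ} {p : R[X]} (r : R)
    (hp : p ∈ degreeLT R (d + 1)) :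
    taylor r p - p ∈ degreeLT R d := by
  rw [degreeLT_succ_eq_degreeLE, mem_degreeLE] at hp
  rw [mem_degreeLT]
  rcases eq_or_ne p 0 with rfl | hp0
  · simp
  calc (taylor r p - p).degree < (taylor r p).degree :=
        degree_sub_lt_left (degree_taylor p r) (by simpa using hp0) (leadingCoeff_taylor r p)
    _ = p.degree := degree_taylor p r
    _ ≤ d := hp

theorem aeval_iterate_taylor_one_sub_self {R A : Type*} [CommRing R] [Ring A] [Algebra R A]
    (k : ℕ) (p : R[X]) (t : A) :
    aeval t ((fun q => taylor 1 q - q)^[k] p) = (fwdDiff 1)^[k] (fun u => aeval u p) t := by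
  have hsemi : Function.Semiconj (fun (q : R[X]) (u : A) => aeval u q)
      (fun q => taylor 1 q - q) (fwdDiff 1) := fun q => by
    ext u
    simp [fwdDiff, aeval_taylor]
  exact congrFun (hsemi.iterate_right k p) t

end Polynomial

namespace Cremona

variable {K : Type*} [Field K]

local notation "Cr₂(" K ")" => CremonaField K ≃ₐ[K] CremonaField K

theorem algEquiv_ext {σ τ : Cr₂(K)} (hx : σ (genX K) = τ (genX K))
    (hy : σ (genY K) = τ (genY K)) : σ = τ := by
  refine AlgEquiv.coe_toAlgHom_injective <|
    IsLocalization.algHom_ext (nonZeroDivisors (MvPolynomial (Fin 2) K)) <|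
    MvPolynomial.algHom_ext fun i => ?_
  fin_cases i
  · exact hx
  · exact hy

def IsTriangular (σ : Cr₂(K)) (c : K) (p : K[X]) : Prop :=
  σ (genX K) = genX K + algebraMap K _ c ∧ σ (genY K) = genY K + aeval (genX K) p

theorem isTriangular_one : IsTriangular (1 : Cr₂(K)) 0 0 := by
  simp [IsTriangular]

namespace IsTriangular

variable {σ τ : Cr₂(K)} {c d : K} {p q : K[X]}

theorem eq_one (h : IsTriangular σ 0 0) : σ = 1 :=
  algEquiv_ext (by simpa using h.1) (by simpa using h.2)

theorem mul (hσ : IsTriangular σ c p) (hτ : IsTriangular τ d q) :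
    IsTriangular (σ * τ) (c + d) (p + taylor c q) := by
  constructor
  · rw [AlgEquiv.mul_apply, hτ.1, map_add, hσ.1, AlgEquiv.commutes, map_add, add_assoc]
  · rw [AlgEquiv.mul_apply, hτ.2, map_add, hσ.2, ← aeval_algHom_apply,
      hσ.1, map_add, aeval_taylor, add_assoc]

theorem inv (hσ : IsTriangular σ c p) : IsTriangular σ⁻¹ (-c) (-taylor (-c) p) := by
  have hx : σ (genX K + algebraMap K _ (-c)) = genX K := by
    rw [map_add, hσ.1, AlgEquiv.commutes, map_neg, add_neg_cancel_right]
  constructor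
  · apply σ.injective
    rw [← AlgEquiv.mul_apply, mul_inv_cancel, AlgEquiv.one_apply, hx]
  · apply σ.injective
    rw [← AlgEquiv.mul_apply, mul_inv_cancel, AlgEquiv.one_apply, map_add, hσ.2,
      ← aeval_algHom_apply, hσ.1, map_neg, aeval_taylor, map_neg,
      add_neg_cancel_right, add_neg_cancel_right]

theorem commutatorElement (hσ : IsTriangular σ c p) (hτ : IsTriangular τ d q) :
    IsTriangular ⁅σ, τ⁆ 0 ((p - taylor d p) + (taylor c q - q)) := by
  have h := ((hσ.mul hτ).mul hσ.inv).mul hτ.inv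
  rw [← commutatorElement_def] at h
  have hshift : c + d + -c = d := by ring
  simp only [map_neg, taylor_taylor, hshift, add_neg_cancel, taylor_zero] at h
  convert h using 1
  abel

theorem iterate_commutatorElement {s σ : Cr₂(K)} (hs : IsTriangular s 1 0)
    (hσ : IsTriangular σ 0 p) (k : ℕ) :
    IsTriangular ((⁅s, ·⁆)^[k] σ) 0 ((fun q => taylor 1 q - q)^[k] p) := by
  induction k with
  | zero => exact hσ
  | succ k ih =>
    rw [Function.iterate_succ_apply', Function.iterate_succ_apply']
    simpa using hs.commutatorElement ih

theorem iterate_commutatorElement_ne_one [CharZero K] {s a : Cr₂(K)} {n : ℕ}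
    (hs : IsTriangular s 1 0) (ha : IsTriangular a 0 (Polynomial.X ^ n)) :
    (⁅s, ·⁆)^[n] a ≠ 1 := by
  have : CharZero (CremonaField K) :=
    charZero_of_injective_algebraMap (algebraMap K (CremonaField K)).injective
  intro h1
  have hy := (hs.iterate_commutatorElement ha n).2
  simp only [h1, AlgEquiv.one_apply, aeval_iterate_taylor_one_sub_self, aeval_X_pow,
    fwdDiff_iter_eq_factorial, Pi.natCast_apply, left_eq_add] at hy
  exact n.factorial_ne_zero (by exact_mod_cast hy)

end IsTriangular

variable (K) in
def triangular (d : ℕ) : Subgroup Cr₂(K) where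
  carrier := {σ | ∃ c, ∃ p ∈ degreeLT K d, IsTriangular σ c p}
  one_mem' := ⟨0, 0, zero_mem _, isTriangular_one⟩
  mul_mem' := by
    rintro σ τ ⟨c, p, hp, hσ⟩ ⟨e, q, hq, hτ⟩
    exact ⟨c + e, _, add_mem hp (taylor_mem_degreeLT.mpr hq), hσ.mul hτ⟩
  inv_mem' := by
    rintro σ ⟨c, p, hp, hσ⟩
    exact ⟨-c, _, neg_mem (taylor_mem_degreeLT.mpr hp), hσ.inv⟩

variable (K) in
def vertical (d : ℕ) : Subgroup Cr₂(K) where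
  carrier := {σ | ∃ p ∈ degreeLT K d, IsTriangular σ 0 p}
  one_mem' := ⟨0, zero_mem _, isTriangular_one⟩
  mul_mem' := by
    rintro σ τ ⟨p, hp, hσ⟩ ⟨q, hq, hτ⟩
    exact ⟨p + q, add_mem hp hq, by simpa using hσ.mul hτ⟩
  inv_mem' := by
    rintro σ ⟨p, hp, hσ⟩
    exact ⟨-p, neg_mem hp, by simpa using hσ.inv⟩

theorem vertical_zero : vertical K 0 = ⊥ := by
  refine eq_bot_iff.mpr fun σ ⟨p, hp, hσ⟩ => ?_
  rw [mem_degreeLT, Nat.cast_zero, Nat.WithBot.lt_zero_iff, degree_eq_bot] at hp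
  exact (hp ▸ hσ).eq_one

theorem commutator_triangular_le (d : ℕ) :
    ⁅triangular K (d + 1), triangular K (d + 1)⁆ ≤ vertical K d := by
  rw [Subgroup.commutator_le]
  rintro σ ⟨c, p, hp, hσ⟩ τ ⟨e, q, hq, hτ⟩
  refine ⟨_, add_mem ?_ (taylor_sub_self_mem_degreeLT c hq), hσ.commutatorElement hτ⟩
  rw [← neg_sub]
  exact neg_mem (taylor_sub_self_mem_degreeLT e hp)

theorem commutator_vertical_triangular_le (d m : ℕ) :
    ⁅vertical K (d + 1), triangular K m⁆ ≤ vertical K d := by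
  rw [Subgroup.commutator_le]
  rintro σ ⟨p, hp, hσ⟩ τ ⟨e, q, -, hτ⟩
  refine ⟨p - taylor e p, ?_, by simpa using hσ.commutatorElement hτ⟩
  rw [← neg_sub]
  exact neg_mem (taylor_sub_self_mem_degreeLT e hp)

theorem lowerCentralSeries_le_vertical {Γ : Subgroup Cr₂(K)} {n : ℕ}
    (hΓ : Γ ≤ triangular K (n + 1)) :
    ∀ k ≤ n, Γ.lowerCentralSeries (k + 1) ≤ vertical K (n - k)
  | 0, _ => (Subgroup.commutator_mono hΓ hΓ).trans (commutator_triangular_le n)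
  | k + 1, hk => by
    have hk' := lowerCentralSeries_le_vertical hΓ k (by omega)
    rw [show n - k = n - (k + 1) + 1 by omega] at hk'
    exact (Subgroup.commutator_mono hk' hΓ).trans (commutator_vertical_triangular_le _ _)

theorem lowerCentralSeries_eq_bot {Γ : Subgroup Cr₂(K)} {n : ℕ}
    (hΓ : Γ ≤ triangular K (n + 1)) : Γ.lowerCentralSeries (n + 1) = ⊥ := by
  simpa [vertical_zero] using lowerCentralSeries_le_vertical hΓ n le_rfl

end Cremona

open Cremona

theorem statement1_general (K : Type*) [Field K] [CharZero K] (n : ℕ)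
    (s a : CremonaField K ≃ₐ[K] CremonaField K)
    (hsx : s (genX K) = genX K + 1) (hsy : s (genY K) = genY K)
    (hax : a (genX K) = genX K) (hay : a (genY K) = genY K + genX K ^ n) :
    ∃ hN : Group.IsNilpotent (Subgroup.closure {s, a} : Subgroup (CremonaField K ≃ₐ[K] CremonaField K)),
      @Group.nilpotencyClass (Subgroup.closure {s, a} : Subgroup (CremonaField K ≃ₐ[K] CremonaField K)) _ = n + 1 := by
  have hs : IsTriangular s 1 0 := ⟨by rw [hsx, map_one], by rw [hsy, map_zero, add_zero]⟩
  have ha : IsTriangular a 0 (Polynomial.X ^ n) :=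
    ⟨by rw [hax, map_zero, add_zero], by rw [hay, aeval_X_pow]⟩
  have hsΓ : s ∈ Subgroup.closure {s, a} := Subgroup.subset_closure (by simp)
  have haΓ : a ∈ Subgroup.closure {s, a} := Subgroup.subset_closure (by simp)
  have hΓ : Subgroup.closure {s, a} ≤ triangular K (n + 1) := by
    rw [Subgroup.closure_le]
    rintro _ (rfl | rfl)
    · exact ⟨1, 0, zero_mem _, hs⟩
    · exact ⟨0, _, by rw [mem_degreeLT, degree_X_pow]; exact_mod_cast n.lt_succ_self, ha⟩
  refine Subgroup.nilpotencyClass_eq_of_lowerCentralSeries (lowerCentralSeries_eq_bot hΓ) ?_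
  intro hbot
  have hmem := Subgroup.iterate_commutatorElement_mem_lowerCentralSeries hsΓ haΓ n
  rw [hbot, Subgroup.mem_bot] at hmem
  exact hs.iterate_commutatorElement_ne_one ha hmem

theorem statement1 (K : Type*) [Field K] [CharZero K] (n : ℕ) (hn : 1 ≤ n)
    (s a : CremonaField K ≃ₐ[K] CremonaField K)
    (hsx : s (genX K) = genX K + 1) (hsy : s (genY K) = genY K)
    (hax : a (genX K) = genX K) (hay : a (genY K) = genY K + genX K ^ n) :
    ∃ hN : Group.IsNilpotent (Subgroup.closure {s, a} : Subgroup (CremonaField K ≃ₐ[K] CremonaField K)),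
      @Group.nilpotencyClass (Subgroup.closure {s, a} : Subgroup (CremonaField K ≃ₐ[K] CremonaField K)) _ = n + 1 :=
  statement1_general K n s a hsx hsy hax hay
end

section
/- Let K be a field of characteristic zero and n ≥ 1. In the planar Cremona group Cr₂(K), let s be the automorphism with s(x) = x + 1, s(y) = y, and a the automorphism with a(x) = x, a(y) = y + xⁿ. Then the subgroup Γₙ generated by s and a is torsion-free: every element of Γₙ of finite order is the identity. -/
/-!
Every element of `⟨s, a⟩` has the triangular shape `(x, y) ↦ (x + c, y + p(x))` with `c ∈ K` and
`p ∈ K[x]`, and such maps form a group. If one of them has finite order `m`, then `σᵐ` translates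
`x` by `m c`, so `c = 0`; then `σ` fixes `p`, hence `σᵐ` translates `y` by `m p`, so `p = 0` too.
-/

open MvPolynomial

/-- Torsion-free monoid (Mathlib's former `Monoid.IsTorsionFree`, removed since). -/
def Monoid.IsTorsionFree (G : Type*) [Monoid G] : Prop :=
  ∀ g : G, g ≠ 1 → ¬IsOfFinOrder g

theorem Subgroup.isTorsionFree_of_le {G : Type*} [Group G] {H H' : Subgroup G} (hle : H ≤ H')
    (hH' : Monoid.IsTorsionFree H') : Monoid.IsTorsionFree H := fun g hg hfin =>
  hH' (Subgroup.inclusion hle g) ((map_ne_one_iff _ (Subgroup.inclusion_injective hle)).mpr hg)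
    ((Subgroup.inclusion hle).isOfFinOrder hfin)

namespace AlgEquiv

section CommRing

variable {K L : Type*} [CommRing K] [CommRing L] [Algebra K L]

theorem pow_apply_eq_add_nsmul (σ : L ≃ₐ[K] L) {v w : L} (hv : σ v = v + w) (hw : σ w = w)
    (k : ℕ) : (σ ^ k) v = v + k • w := by
  induction k with
  | zero => simp
  | succ k ih => rw [pow_succ', mul_apply, ih, map_add, map_nsmul, hv, hw, succ_nsmul]; abel

theorem map_mem_adjoin_singleton (σ : L ≃ₐ[K] L) {x q : L}
    (hx : σ x ∈ Algebra.adjoin K {x}) (hq : q ∈ Algebra.adjoin K {x}) :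
    σ q ∈ Algebra.adjoin K {x} := by
  have hσq : σ q ∈ (Algebra.adjoin K {x}).map (σ : L →ₐ[K] L) := ⟨q, hq, rfl⟩
  rw [AlgHom.map_adjoin_singleton] at hσq
  exact Algebra.adjoin_singleton_le hx hσq

theorem apply_eq_self_of_mem_adjoin_singleton (σ : L ≃ₐ[K] L) {x q : L} (hx : σ x = x)
    (hq : q ∈ Algebra.adjoin K {x}) : σ q = q :=
  AlgHom.adjoin_le_equalizer (σ : L →ₐ[K] L) (AlgHom.id K L) (by simpa using hx) hq

end CommRing

theorem eq_zero_of_pow_eq_one_of_apply_eq_add {K L : Type*} [Field K] [CharZero K] [CommRing L]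
    [Algebra K L] (σ : L ≃ₐ[K] L) {m : ℕ} (hm : m ≠ 0) (hσm : σ ^ m = 1) {v w : L}
    (hv : σ v = v + w) (hw : σ w = w) : w = 0 := by
  have hmw : (m : K) • w = 0 := by
    simpa [hσm, Nat.cast_smul_eq_nsmul] using σ.pow_apply_eq_add_nsmul hv hw m
  exact (smul_eq_zero.mp hmw).resolve_left (Nat.cast_ne_zero.mpr hm)

end AlgEquiv

section TriangularTranslations

variable {K L : Type*} [CommRing K] [CommRing L] [Algebra K L]

theorem add_algebraMap_mem_adjoin_singleton (x : L) (c : K) :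
    x + algebraMap K L c ∈ Algebra.adjoin K {x} :=
  add_mem (Algebra.self_mem_adjoin_singleton K x) (Subalgebra.algebraMap_mem _ c)

variable (K) in
def triangularTranslations (x y : L) : Subgroup (L ≃ₐ[K] L) where
  carrier := {σ | (∃ c : K, σ x = x + algebraMap K L c) ∧ ∃ p ∈ Algebra.adjoin K {x}, σ y = y + p}
  one_mem' := ⟨⟨0, by simp⟩, 0, zero_mem _, by simp⟩
  mul_mem' := by
    rintro σ τ ⟨⟨c, hσx⟩, p, hp, hσy⟩ ⟨⟨d, hτx⟩, q, hq, hτy⟩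
    have hσq : σ q ∈ Algebra.adjoin K {x} :=
      σ.map_mem_adjoin_singleton (hσx ▸ add_algebraMap_mem_adjoin_singleton x c) hq
    refine ⟨⟨c + d, ?_⟩, p + σ q, add_mem hp hσq, ?_⟩
    · rw [AlgEquiv.mul_apply, hτx, map_add, hσx, AlgEquiv.commutes, map_add]; ring
    · rw [AlgEquiv.mul_apply, hτy, map_add, hσy]; ring
  inv_mem' := by
    rintro σ ⟨⟨c, hσx⟩, p, hp, hσy⟩
    have hx : σ⁻¹ x = x + algebraMap K L (-c) := by
      have := congrArg σ.symm hσx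
      rw [σ.symm_apply_apply, map_add, AlgEquiv.commutes] at this
      rw [map_neg]
      exact eq_add_neg_of_add_eq this.symm
    have hσp : σ⁻¹ p ∈ Algebra.adjoin K {x} :=
      σ⁻¹.map_mem_adjoin_singleton (hx ▸ add_algebraMap_mem_adjoin_singleton x (-c)) hp
    refine ⟨⟨-c, hx⟩, -σ⁻¹ p, neg_mem hσp, ?_⟩
    have := congrArg σ.symm hσy
    rw [σ.symm_apply_apply, map_add] at this
    exact eq_add_neg_of_add_eq this.symm

end TriangularTranslations

theorem apply_eq_self_of_mem_triangularTranslations_of_pow_eq_one {K L : Type*} [Field K]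
    [CharZero K] [CommRing L] [Algebra K L] {x y : L} {σ : L ≃ₐ[K] L}
    (hσ : σ ∈ triangularTranslations K x y) {m : ℕ} (hm : m ≠ 0) (hσm : σ ^ m = 1) :
    σ x = x ∧ σ y = y := by
  obtain ⟨⟨c, hx⟩, p, hp, hy⟩ := hσ
  have hc : algebraMap K L c = 0 :=
    σ.eq_zero_of_pow_eq_one_of_apply_eq_add hm hσm hx (σ.commutes c)
  rw [hc, add_zero] at hx
  have hp0 : p = 0 :=
    σ.eq_zero_of_pow_eq_one_of_apply_eq_add hm hσm hy
      (σ.apply_eq_self_of_mem_adjoin_singleton hx hp)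
  rw [hp0, add_zero] at hy
  exact ⟨hx, hy⟩

theorem CremonaField.algEquiv_ext {K : Type*} [Field K]
    {σ τ : CremonaField K ≃ₐ[K] CremonaField K} (hx : σ (genX K) = τ (genX K))
    (hy : σ (genY K) = τ (genY K)) : σ = τ := by
  refine AlgEquiv.coe_toAlgHom_injective <|
    IsLocalization.algHom_ext (nonZeroDivisors (MvPolynomial (Fin 2) K)) <|
    MvPolynomial.algHom_ext fun i => ?_
  fin_cases i
  exacts [hx, hy]

theorem isTorsionFree_triangularTranslations (K : Type*) [Field K] [CharZero K] :
    Monoid.IsTorsionFree (triangularTranslations K (genX K) (genY K)) := by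
  rintro ⟨σ, hσ⟩ hne hfin
  obtain ⟨m, hm, hσm⟩ := hfin.exists_pow_eq_one
  obtain ⟨hx, hy⟩ := apply_eq_self_of_mem_triangularTranslations_of_pow_eq_one hσ hm.ne'
    (congrArg Subtype.val hσm)
  exact hne (Subtype.ext (CremonaField.algEquiv_ext hx hy))

theorem statement2_general (K : Type*) [Field K] [CharZero K] (n : ℕ)
    (s a : CremonaField K ≃ₐ[K] CremonaField K)
    (hsx : s (genX K) = genX K + 1) (hsy : s (genY K) = genY K)
    (hax : a (genX K) = genX K) (hay : a (genY K) = genY K + genX K ^ n) :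
    Monoid.IsTorsionFree
      (Subgroup.closure {s, a} : Subgroup (CremonaField K ≃ₐ[K] CremonaField K)) := by
  refine Subgroup.isTorsionFree_of_le ?_ (isTorsionFree_triangularTranslations K)
  rw [Subgroup.closure_le, Set.insert_subset_iff, Set.singleton_subset_iff]
  constructor
  · exact ⟨⟨1, by simp [hsx]⟩, 0, zero_mem _, by simp [hsy]⟩
  · exact ⟨⟨0, by simp [hax]⟩, genX K ^ n, pow_mem (Algebra.self_mem_adjoin_singleton K _) n, hay⟩

theorem statement2 (K : Type*) [Field K] [CharZero K] (n : ℕ) (hn : 1 ≤ n)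
    (s a : CremonaField K ≃ₐ[K] CremonaField K)
    (hsx : s (genX K) = genX K + 1) (hsy : s (genY K) = genY K)
    (hax : a (genX K) = genX K) (hay : a (genY K) = genY K + genX K ^ n) :
    Monoid.IsTorsionFree
      (Subgroup.closure {s, a} : Subgroup (CremonaField K ≃ₐ[K] CremonaField K)) :=
  statement2_general K n s a hsx hsy hax hay
end

section
/- Let K be a field of characteristic zero. In the planar Cremona group Cr₂(K), let s be the automorphism with s(x) = x + 1, s(y) = y; let a be the automorphism with a(x) = x, a(y) = y + 1; and let m be the automorphism with m(x) = x, m(y) = x·y. Then the subgroup G of Cr₂(K) generated by {s, a, m} is torsion-free: every element of G of finite order is the identity. -/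
open MvPolynomial


/-!
Every element of the group is triangular: `x ↦ x + c` with `c ∈ K` and `y ↦ u y + f` with
`f ∈ K(x)` and `u` a quotient of monic polynomials in `x`. If such a `σ` has order dividing
`n ≠ 0`, then `n c = 0`, so `c = 0` in characteristic zero and `σ` fixes `K(x)` pointwise.
Then `σⁿ y = uⁿ y + (1 + u + ⋯ + uⁿ⁻¹) f`; since `y ∉ K(x)` (`a` fixes `x` but not `y`),
this forces `uⁿ = 1`, hence `u = 1` because `pⁿ = qⁿ` for monic `p, q` gives `p = q` by
unique factorization. Finally `σⁿ y = y + n f` gives `f = 0`.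
-/

open IntermediateField
open scoped Polynomial

section Triangular

variable (K : Type*) {L : Type*} [Field K] [Field L] [Algebra K L]

/-- Unlike `K(x)ˣ`, which contains the roots of unity of `K`, this group of multipliers is
torsion-free when `x` is transcendental. -/
def monicRatios (x : L) : Subgroup Lˣ where
  carrier := {u | ∃ p q : K[X], p.Monic ∧ q.Monic ∧
    (u : L) = Polynomial.aeval x p / Polynomial.aeval x q}
  one_mem' := ⟨1, 1, Polynomial.monic_one, Polynomial.monic_one, by simp⟩
  mul_mem' := by
    rintro u v ⟨p, q, hp, hq, hu⟩ ⟨p', q', hp', hq', hv⟩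
    exact ⟨p * p', q * q', hp.mul hp', hq.mul hq', by
      rw [Units.val_mul, hu, hv, map_mul, map_mul, div_mul_div_comm]⟩
  inv_mem' := by
    rintro u ⟨p, q, hp, hq, hu⟩
    exact ⟨q, p, hq, hp, by rw [Units.val_inv_eq_inv_val, hu, inv_div]⟩

variable {K} {x : L}

lemma val_mem_adjoin_of_mem_monicRatios {u : Lˣ} (hu : u ∈ monicRatios K x) :
    (u : L) ∈ K⟮x⟯ := by
  obtain ⟨p, q, -, -, hu⟩ := hu
  exact (mem_adjoin_simple_iff K _).mpr ⟨p, q, hu⟩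

lemma eq_one_of_pow_eq_one_of_mem_monicRatios (hx : Transcendental K x) {u : Lˣ}
    (hu : u ∈ monicRatios K x) {n : ℕ} (hn : n ≠ 0) (hun : u ^ n = 1) : u = 1 := by
  obtain ⟨p, q, hp, hq, hu⟩ := hu
  have aeval_ne_zero {r : K[X]} (hr : r.Monic) : Polynomial.aeval x r ≠ 0 :=
    fun h ↦ hr.ne_zero (transcendental_iff_injective.mp hx (by rw [h, map_zero]))
  have hpow : p ^ n = q ^ n := by
    apply transcendental_iff_injective.mp hx
    rw [map_pow, map_pow, ← div_eq_one_iff_eq (pow_ne_zero n (aeval_ne_zero hq)), ← div_pow,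
      ← hu, ← Units.val_pow_eq_pow_val, hun, Units.val_one]
  have dvd_of_pow_eq {a b : K[X]} (h : a ^ n = b ^ n) : a ∣ b :=
    (UniqueFactorizationMonoid.pow_dvd_pow_iff_dvd hn).mp h.dvd
  have hpq : p = q := Polynomial.eq_of_monic_of_associated hp hq <|
    associated_of_dvd_dvd (dvd_of_pow_eq hpow) (dvd_of_pow_eq hpow.symm)
  exact Units.ext (by rw [hu, hpq, div_self (aeval_ne_zero hq), Units.val_one])

lemma map_mem_monicRatios {σ : L ≃ₐ[K] L} {c : K} (hσ : σ x = x + algebraMap K L c)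
    {u : Lˣ} (hu : u ∈ monicRatios K x) : Units.map (σ : L →* L) u ∈ monicRatios K x := by
  obtain ⟨p, q, hp, hq, hu⟩ := hu
  set t : K[X] := Polynomial.X + Polynomial.C c
  have aeval_comp (r : K[X]) : Polynomial.aeval x (r.comp t) = σ (Polynomial.aeval x r) := by
    rw [Polynomial.aeval_comp, ← Polynomial.aeval_algHom_apply, hσ]
    simp [t]
  refine ⟨p.comp t, q.comp t, hp.comp_X_add_C c, hq.comp_X_add_C c, ?_⟩
  rw [aeval_comp, aeval_comp, ← map_div₀, ← hu]
  rfl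

lemma apply_mem_adjoin_simple {σ : L ≃ₐ[K] L} (hσ : σ x ∈ K⟮x⟯) {z : L} (hz : z ∈ K⟮x⟯) :
    σ z ∈ K⟮x⟯ := by
  have : K⟮x⟯.map (σ : L →ₐ[K] L) ≤ K⟮x⟯ := by
    rw [adjoin_map, Set.image_singleton, adjoin_simple_le_iff]
    exact hσ
  exact this ⟨z, hz, rfl⟩

lemma apply_eq_self_of_mem_adjoin_simple {σ : L ≃ₐ[K] L} (hσ : σ x = x) {z : L}
    (hz : z ∈ K⟮x⟯) : σ z = z :=
  (forall_mem_adjoin_smul_eq_self_iff K σ).mpr (by simpa using hσ) z hz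

variable (K x) in
def triangularSubgroup (y : L) : Subgroup (L ≃ₐ[K] L) where
  carrier := {σ | ∃ c : K, ∃ u ∈ monicRatios K x, ∃ f ∈ K⟮x⟯,
    σ x = x + algebraMap K L c ∧ σ y = u * y + f}
  one_mem' := ⟨0, 1, one_mem _, 0, zero_mem _, by simp, by simp⟩
  mul_mem' := by
    rintro σ τ ⟨c, u, hu, f, hf, hσx, hσy⟩ ⟨d, v, hv, g, hg, hτx, hτy⟩
    have hσK : σ x ∈ K⟮x⟯ := by
      rw [hσx]; exact add_mem (mem_adjoin_simple_self K x) (IntermediateField.algebraMap_mem _ c)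
    refine ⟨c + d, Units.map (σ : L →* L) v * u, mul_mem (map_mem_monicRatios hσx hv) hu,
      σ v * f + σ g, add_mem (mul_mem (apply_mem_adjoin_simple hσK
        (val_mem_adjoin_of_mem_monicRatios hv)) hf) (apply_mem_adjoin_simple hσK hg), ?_, ?_⟩
    · rw [AlgEquiv.mul_apply, hτx, map_add, hσx, AlgEquiv.commutes, map_add, add_assoc]
    · rw [AlgEquiv.mul_apply, hτy, map_add, map_mul, hσy, Units.val_mul, Units.coe_map]
      simp only [MonoidHom.coe_coe]
      ring
  inv_mem' := by
    rintro σ ⟨c, u, hu, f, hf, hσx, hσy⟩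
    have hx : σ⁻¹ x = x + algebraMap K L (-c) := by
      rw [map_neg, ← sub_eq_add_neg, eq_sub_iff_add_eq, ← σ⁻¹.commutes c, ← map_add, ← hσx]
      exact σ.symm_apply_apply x
    have hxK : σ⁻¹ x ∈ K⟮x⟯ := by
      rw [hx]; exact add_mem (mem_adjoin_simple_self K x) (IntermediateField.algebraMap_mem _ _)
    set v := Units.map ((σ⁻¹ : L ≃ₐ[K] L) : L →* L) u
    have hy : y = v * σ⁻¹ y + σ⁻¹ f := by
      rw [Units.coe_map, MonoidHom.coe_coe, ← map_mul, ← map_add, ← hσy]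
      exact (σ.symm_apply_apply y).symm
    have hvK : ((v⁻¹ : Lˣ) : L) ∈ K⟮x⟯ := by
      rw [Units.val_inv_eq_inv_val]
      exact inv_mem (apply_mem_adjoin_simple hxK (val_mem_adjoin_of_mem_monicRatios hu))
    refine ⟨-c, v⁻¹, inv_mem (map_mem_monicRatios hx hu), -(v⁻¹ * σ⁻¹ f),
      neg_mem (mul_mem hvK (apply_mem_adjoin_simple hxK hf)), hx, ?_⟩
    linear_combination -((v⁻¹ : Lˣ) : L) * hy - σ⁻¹ y * Units.inv_mul v

lemma notMem_adjoin_simple_of_apply_eq_add_one {τ : L ≃ₐ[K] L} {y : L} (hx : τ x = x)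
    (hy : τ y = y + 1) : y ∉ K⟮x⟯ := fun h ↦ by
  simpa [hy] using apply_eq_self_of_mem_adjoin_simple hx h

lemma pow_apply_of_apply_eq_mul_add (σ : L ≃ₐ[K] L) {u f y : L} (hu : σ u = u) (hf : σ f = f)
    (hy : σ y = u * y + f) (k : ℕ) :
    (σ ^ k) y = u ^ k * y + (∑ i ∈ Finset.range k, u ^ i) * f := by
  induction k with
  | zero => simp
  | succ k ih =>
    rw [pow_succ', AlgEquiv.mul_apply, ih, map_add, map_mul, map_mul, map_pow, map_sum, hy, hu,
      hf]
    simp only [map_pow, hu, Finset.sum_range_succ]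
    ring

lemma apply_eq_self_of_mem_triangularSubgroup_of_pow_eq_one [CharZero K]
    (hx : Transcendental K x) {y : L} (hy : y ∉ K⟮x⟯) {σ : L ≃ₐ[K] L}
    (hσ : σ ∈ triangularSubgroup K x y) {n : ℕ} (hn : n ≠ 0) (hσn : σ ^ n = 1) :
    σ x = x ∧ σ y = y := by
  have : CharZero L := charZero_of_injective_algebraMap (algebraMap K L).injective
  obtain ⟨c, u, hu, f, hf, hσx, hσy⟩ := hσ
  have hc : c = 0 := by
    have hpow := pow_apply_of_apply_eq_mul_add σ (map_one σ) (σ.commutes c)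
      (by rw [hσx, one_mul]) n
    simpa [hσn, hn] using hpow
  rw [hc, map_zero, add_zero] at hσx
  have hfix {z : L} (hz : z ∈ K⟮x⟯) : σ z = z := apply_eq_self_of_mem_adjoin_simple hσx hz
  have huK := val_mem_adjoin_of_mem_monicRatios hu
  have hpow := pow_apply_of_apply_eq_mul_add σ (hfix huK) (hfix hf) hσy n
  rw [hσn, AlgEquiv.one_apply] at hpow
  have hun : (u : L) ^ n = 1 := by
    by_contra h
    refine hy ?_
    have : y = (∑ i ∈ Finset.range n, (u : L) ^ i) * f / (1 - (u : L) ^ n) := by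
      rw [eq_div_iff (sub_ne_zero.mpr (Ne.symm h))]
      linear_combination hpow
    rw [this]
    exact div_mem (mul_mem (sum_mem fun i _ ↦ pow_mem huK i) hf)
      (sub_mem (one_mem _) (pow_mem huK n))
  have hu1 : u = 1 :=
    eq_one_of_pow_eq_one_of_mem_monicRatios hx hu hn (Units.ext (by simpa using hun))
  have hf0 : f = 0 := by simpa [hu1, hn] using hpow
  exact ⟨hσx, by rw [hσy, hu1, hf0, Units.val_one, one_mul, add_zero]⟩

end Triangular

lemma transcendental_genX (K : Type*) [Field K] : Transcendental K (genX K) :=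
  (transcendental_algebraMap_iff (IsFractionRing.injective _ _)).mpr (transcendental_X K 0)

lemma eq_one_of_apply_genX_of_apply_genY {K : Type*} [Field K]
    {σ : CremonaField K ≃ₐ[K] CremonaField K} (hx : σ (genX K) = genX K)
    (hy : σ (genY K) = genY K) : σ = 1 := by
  have : (σ : CremonaField K →ₐ[K] CremonaField K) = AlgHom.id K _ :=
    IsLocalization.algHom_ext (nonZeroDivisors (MvPolynomial (Fin 2) K)) <|
      MvPolynomial.algHom_ext fun i ↦ by fin_cases i <;> assumption
  exact AlgEquiv.ext fun z ↦ DFunLike.congr_fun this z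

theorem statement7 (K : Type*) [Field K] [CharZero K]
    (s a m : CremonaField K ≃ₐ[K] CremonaField K)
    (hsx : s (genX K) = genX K + 1) (hsy : s (genY K) = genY K)
    (hax : a (genX K) = genX K) (hay : a (genY K) = genY K + 1)
    (hmx : m (genX K) = genX K) (hmy : m (genY K) = genX K * genY K) :
    Monoid.IsTorsionFree
      (Subgroup.closure {s, a, m} : Subgroup (CremonaField K ≃ₐ[K] CremonaField K)) := by
  have hG : Subgroup.closure {s, a, m} ≤ triangularSubgroup K (genX K) (genY K) := by
    rw [Subgroup.closure_le]
    rintro g (rfl | rfl | rfl)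
    · exact ⟨1, 1, one_mem _, 0, zero_mem _, by simp [hsx], by simp [hsy]⟩
    · exact ⟨0, 1, one_mem _, 1, one_mem _, by simp [hax], by simp [hay]⟩
    · refine ⟨0, Units.mk0 (genX K) fun h ↦ transcendental_genX K (h ▸ isAlgebraic_zero), ?_,
        0, zero_mem _, by simp [hmx], by simp [hmy]⟩
      exact ⟨Polynomial.X, 1, Polynomial.monic_X, Polynomial.monic_one, by simp⟩
  rintro ⟨g, hg⟩ hg1 hfin
  obtain ⟨n, hn, hgn⟩ := isOfFinOrder_iff_pow_eq_one.mp hfin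
  obtain ⟨hx, hy⟩ := apply_eq_self_of_mem_triangularSubgroup_of_pow_eq_one
    (transcendental_genX K) (notMem_adjoin_simple_of_apply_eq_add_one hax hay) (hG hg) hn.ne'
    (by simpa using congrArg Subtype.val hgn)
  exact hg1 (Subtype.ext (eq_one_of_apply_genX_of_apply_genY hx hy))
end

section
/- Let G be a torsion-free nilpotent group of nilpotency class exactly c, and let H be a subgroup of G of finite index. Then H is also nilpotent of nilpotency class exactly c. -/
local notation "ζ" => Subgroup.upperCentralSeries

open scoped commutatorElement

section

variable {G : Type*} [Group G]

theorem commutatorElement_pow_left_of_commute {x y : G} (h : Commute x ⁅x, y⁆) (n : ℕ) :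
    ⁅x ^ n, y⁆ = ⁅x, y⁆ ^ n := by
  induction n with
  | zero => simp
  | succ n ih =>
    rw [pow_succ', commutatorElement_mul_left_eq_conj_mul, ih, (h.pow_right n).eq,
      mul_inv_cancel_right, pow_succ]

theorem Commute.of_pow_right [IsMulTorsionFree G] {x y : G} {n : ℕ} (hn : n ≠ 0)
    (h : Commute x (y ^ n)) : Commute x y := by
  have hconj : (x * y * x⁻¹) ^ n = y ^ n := by rw [conj_pow, h.eq, mul_inv_cancel_right]
  rw [Commute, SemiconjBy, ← mul_inv_eq_iff_eq_mul, pow_left_injective hn hconj]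

theorem isTorsionFree_quotient_of_pow_mem {N : Subgroup G} [N.Normal]
    (h : ∀ (x : G) (n : ℕ), n ≠ 0 → x ^ n ∈ N → x ∈ N) : Monoid.IsTorsionFree (G ⧸ N) := by
  intro q hq hfin
  obtain ⟨n, hn, hpow⟩ := isOfFinOrder_iff_pow_eq_one.mp hfin
  obtain ⟨x, rfl⟩ := QuotientGroup.mk_surjective q
  rw [← QuotientGroup.mk_pow, QuotientGroup.eq_one_iff] at hpow
  exact hq ((QuotientGroup.eq_one_iff x).mpr (h x n hn.ne' hpow))

end

namespace Monoid.IsTorsionFree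

variable {G : Type*} [Group G]

theorem eq_one_of_pow_eq_one (htf : Monoid.IsTorsionFree G) {x : G} {n : ℕ} (hn : n ≠ 0)
    (h : x ^ n = 1) : x = 1 := by
  by_contra hx
  exact htf x hx (isOfFinOrder_iff_pow_eq_one.mpr ⟨n, Nat.pos_of_ne_zero hn, h⟩)

theorem mem_upperCentralSeries_of_pow_mem_of_mem_succ (htf : Monoid.IsTorsionFree G) {j : ℕ}
    {x : G} {n : ℕ} (hn : n ≠ 0) (hx : x ∈ ζ G (j + 1)) (hxn : x ^ n ∈ ζ G j) :
    x ∈ ζ G j := by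
  induction j generalizing x with
  | zero =>
    rw [Subgroup.upperCentralSeries_zero, Subgroup.mem_bot] at hxn ⊢
    exact htf.eq_one_of_pow_eq_one hn hxn
  | succ j ih =>
    intro y
    have hc : ⁅x, y⁆ ∈ ζ G (j + 1) := hx y
    let π := QuotientGroup.mk' (ζ G j)
    have hcentral : Commute (π x) ⁅π x, π y⁆ := by
      rw [← map_commutatorElement, ← commutatorElement_eq_one_iff_commute,
        ← map_commutatorElement, ← commutatorElement_inv, map_inv, inv_eq_one,
        QuotientGroup.mk'_apply, QuotientGroup.eq_one_iff]
      exact hc x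
    -- modulo `ζⱼ G` the commutator `⁅x, y⁆` is central, so `⁅x, y⁆ⁿ ≡ ⁅xⁿ, y⁆ ≡ 1`
    have hcn : ⁅x, y⁆ ^ n ∈ ζ G j := by
      rw [← QuotientGroup.eq_one_iff, ← QuotientGroup.mk'_apply, map_pow, map_commutatorElement,
        ← commutatorElement_pow_left_of_commute hcentral, ← map_pow, ← map_commutatorElement,
        QuotientGroup.mk'_apply, QuotientGroup.eq_one_iff]
      exact hxn y
    exact ih hc hcn

variable [Group.IsNilpotent G]

theorem mem_upperCentralSeries_of_pow_mem (htf : Monoid.IsTorsionFree G) (i : ℕ) {x : G} {n : ℕ}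
    (hn : n ≠ 0) (h : x ^ n ∈ ζ G i) : x ∈ ζ G i := by
  suffices ∀ m, x ∈ ζ G (i + m) → x ∈ ζ G i from
    this _ (Subgroup.upperCentralSeries_mono G (Nat.le_add_left _ i)
      (Subgroup.upperCentralSeries_nilpotencyClass (G := G) ▸ Subgroup.mem_top x))
  intro m
  induction m with
  | zero => exact id
  | succ m ih =>
    exact fun hx => ih (htf.mem_upperCentralSeries_of_pow_mem_of_mem_succ hn hx
      (Subgroup.upperCentralSeries_mono G (Nat.le_add_right i m) h))

theorem quotient_upperCentralSeries (htf : Monoid.IsTorsionFree G) (i : ℕ) :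
    Monoid.IsTorsionFree (G ⧸ ζ G i) :=
  isTorsionFree_quotient_of_pow_mem fun _ _ hn => htf.mem_upperCentralSeries_of_pow_mem i hn

theorem isMulTorsionFree : Monoid.IsTorsionFree G → IsMulTorsionFree G := by
  refine Group.nilpotent_center_quotient_ind
    (P := fun G _ _ => Monoid.IsTorsionFree G → IsMulTorsionFree G) G
    (fun _ _ _ _ => inferInstance) fun G _ _ ih htf => ⟨fun n hn u v huv => ?_⟩
  have := ih <| isTorsionFree_quotient_of_pow_mem fun x _ hn hx => by
    rw [← Subgroup.upperCentralSeries_one] at hx ⊢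
    exact htf.mem_upperCentralSeries_of_pow_mem 1 hn hx
  have hQ : (u : G ⧸ Subgroup.center G) = v := by
    refine pow_left_injective hn ?_
    simp only [← QuotientGroup.mk_pow]
    exact congrArg _ huv
  obtain ⟨z, hz, rfl⟩ : ∃ z ∈ Subgroup.center G, v = u * z :=
    ⟨u⁻¹ * v, QuotientGroup.eq.mp hQ, (mul_inv_cancel_left u v).symm⟩
  have hzn : z ^ n = 1 := by
    have hcomm : Commute u z := Subgroup.mem_center_iff.mp hz u
    simpa [hcomm.mul_pow] using huv.symm
  simp [htf.eq_one_of_pow_eq_one hn hzn]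

theorem commutatorElement_mem_upperCentralSeries_of_pow (htf : Monoid.IsTorsionFree G) (i : ℕ)
    {x y : G} {n : ℕ} (hn : n ≠ 0) (h : ⁅x, y ^ n⁆ ∈ ζ G i) : ⁅x, y⁆ ∈ ζ G i := by
  have := (htf.quotient_upperCentralSeries i).isMulTorsionFree
  rw [← QuotientGroup.eq_one_iff, ← QuotientGroup.mk'_apply, map_commutatorElement, map_pow,
    commutatorElement_eq_one_iff_commute] at h
  rw [← QuotientGroup.eq_one_iff, ← QuotientGroup.mk'_apply, map_commutatorElement,
    commutatorElement_eq_one_iff_commute]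
  exact h.of_pow_right hn

theorem coe_mem_upperCentralSeries (htf : Monoid.IsTorsionFree G) {H : Subgroup G}
    (hH : H.index ≠ 0) {i : ℕ} {h : H} (hh : h ∈ ζ H i) : (h : G) ∈ ζ G i := by
  induction i generalizing h with
  | zero =>
    rw [Subgroup.upperCentralSeries_zero, Subgroup.mem_bot] at hh ⊢
    simp [hh]
  | succ i ih =>
    intro a
    obtain ⟨n, hn, -, han⟩ := Subgroup.exists_pow_mem_of_index_ne_zero hH a
    refine htf.commutatorElement_mem_upperCentralSeries_of_pow i hn.ne' ?_
    simpa [commutatorElement_def] using ih (hh ⟨a ^ n, han⟩)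

theorem nilpotencyClass_subgroup_of_index_ne_zero (htf : Monoid.IsTorsionFree G) {H : Subgroup G}
    (hH : H.index ≠ 0) :
    Group.nilpotencyClass H = Group.nilpotencyClass G := by
  refine le_antisymm (Subgroup.nilpotencyClass_le H) ?_
  rw [← Subgroup.upperCentralSeries_eq_top_iff_nilpotencyClass_le, eq_top_iff]
  intro g _
  obtain ⟨n, hn, -, hgn⟩ := Subgroup.exists_pow_mem_of_index_ne_zero hH g
  refine htf.mem_upperCentralSeries_of_pow_mem _ hn.ne'
    (htf.coe_mem_upperCentralSeries hH (h := ⟨g ^ n, hgn⟩) ?_)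
  exact Subgroup.upperCentralSeries_nilpotencyClass (G := H) ▸ Subgroup.mem_top _

end Monoid.IsTorsionFree

theorem statement13 (G : Type*) [Group G] (htf : Monoid.IsTorsionFree G)
    [hG : Group.IsNilpotent G] (c : ℕ) (hc : Group.nilpotencyClass G = c)
    (H : Subgroup G) (hH : H.index ≠ 0) :
    ∃ hHN : Group.IsNilpotent H, Group.nilpotencyClass H = c :=
  ⟨inferInstance, hc ▸ htf.nilpotencyClass_subgroup_of_index_ne_zero hH⟩
end

section
/- Let F be a field, p a prime number with p different from the characteristic of F, and n a natural number. Let A and S be elements of GL_n(F), and set B = S·A·S⁻¹·A⁻¹. Assume that B commutes with both A and S, that A^p = 1, that B^p = 1, and that B ≠ 1. Then p ≤ n. -/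
/-!
Pass to an algebraic closure. Since `p` is invertible, `X ^ p - 1` is separable, so `B` is
diagonalizable, and as `B ≠ 1` it has an eigenvalue `ζ ≠ 1`, a primitive `p`-th root of unity.
The eigenspace `W` of `ζ` is invariant under `A` and `S`, and on `W` the relation `S A = B A S`
reads `S A = ζ A S`. Taking determinants on `W` gives `ζ ^ dim W = 1`, so `p ∣ dim W`, and
`0 < dim W ≤ n`.
-/

open Polynomial Module
open scoped commutatorElement

namespace Module.End

variable {K V : Type*} [Field K] [AddCommGroup V] [Module K V]

theorem det_restrict_ne_zero_of_injective [FiniteDimensional K V] {f : End K V}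
    (hf : Function.Injective f) {W : Submodule K V} (hW : ∀ x ∈ W, f x ∈ W) :
    (f.restrict hW).det ≠ 0 :=
  LinearMap.det_eq_zero_iff_ker_ne_bot.not_left.mpr <| LinearMap.ker_eq_bot.mpr
    fun _ _ h ↦ Subtype.ext <| hf congr(($h : V))

theorem HasEigenvalue.pow_eq_one_of_pow_eq_one {b : End K V} {ζ : K} (hζ : b.HasEigenvalue ζ)
    {p : ℕ} (hbp : b ^ p = 1) : ζ ^ p = 1 := by
  obtain ⟨v, hv⟩ := hζ.exists_hasEigenvector
  have hpv := hv.pow_apply p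
  rw [hbp, one_apply] at hpv
  exact smul_left_injective K hv.2 (by simpa using hpv.symm)

theorem exists_hasEigenvalue_ne_one_of_pow_eq_one [IsAlgClosed K] [FiniteDimensional K V]
    {b : End K V} {p : ℕ} (hp : (p : K) ≠ 0) (hbp : b ^ p = 1) (hb : b ≠ 1) :
    ∃ ζ ≠ 1, b.HasEigenvalue ζ := by
  have hss : b.IsSemisimple :=
    isSemisimple_of_squarefree_aeval_eq_zero (X_pow_sub_one_separable_iff.mpr hp).squarefree
      (by simp [hbp])
  by_contra! h
  refine hb (LinearMap.ext fun v ↦ ?_)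
  have htop : b.eigenspace 1 = ⊤ := by
    rw [← hss.iSup_eigenspace_eq_top]
    refine le_antisymm (le_iSup _ 1) (iSup_le fun μ ↦ ?_)
    rcases eq_or_ne μ 1 with rfl | hμ
    · exact le_rfl
    · simp [not_not.mp (h μ hμ)]
  simpa using mem_eigenspace_iff.mp (htop ▸ Submodule.mem_top : v ∈ b.eigenspace 1)

theorem pow_finrank_eigenspace_commutatorElement_eq_one [FiniteDimensional K V]
    (a s : (End K V)ˣ) (ha : Commute ⁅s, a⁆ a) (hs : Commute ⁅s, a⁆ s) (ζ : K) :
    ζ ^ finrank K (((⁅s, a⁆ : (End K V)ˣ) : End K V).eigenspace ζ) = 1 := by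
  set b : (End K V)ˣ := ⁅s, a⁆ with hb
  have hsa : (s * a : End K V) = b * (a * s) := by
    simp only [← Units.val_mul, hb, commutatorElement_def]
    group
  have haW := mapsTo_genEigenspace_of_comm ha.units_val ζ 1
  have hsW := mapsTo_genEigenspace_of_comm hs.units_val ζ 1
  set a₀ := (a : End K V).restrict haW
  set s₀ := (s : End K V).restrict hsW
  have hkey : s₀ * a₀ = ζ • (a₀ * s₀) := by
    ext v
    have hv : (a : End K V) ((s : End K V) v) ∈ (b : End K V).eigenspace ζ := haW (hsW v.2)
    change (s : End K V) ((a : End K V) v) = ζ • (a : End K V) ((s : End K V) v)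
    rw [← mem_eigenspace_iff.mp hv]
    exact congr($hsa v)
  have hdet := congrArg LinearMap.det hkey
  rw [LinearMap.det_smul, map_mul, map_mul, mul_comm] at hdet
  have ha₀ := det_restrict_ne_zero_of_injective ((isUnit_iff _).mp a.isUnit).injective haW
  have hs₀ := det_restrict_ne_zero_of_injective ((isUnit_iff _).mp s.isUnit).injective hsW
  exact (mul_eq_right₀ (mul_ne_zero ha₀ hs₀)).mp hdet.symm

theorem le_finrank_of_commutatorElement_pow_eq_one [IsAlgClosed K] [FiniteDimensional K V]
    {p : ℕ} (hp : p.Prime) (hpK : (p : K) ≠ 0) (a s : (End K V)ˣ) (ha : Commute ⁅s, a⁆ a)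
    (hs : Commute ⁅s, a⁆ s) (hpow : ⁅s, a⁆ ^ p = 1) (hne : ⁅s, a⁆ ≠ 1) :
    p ≤ finrank K V := by
  have : Fact p.Prime := ⟨hp⟩
  set b : End K V := ((⁅s, a⁆ : (End K V)ˣ) : End K V)
  have hbp : b ^ p = 1 := by rw [← Units.val_pow_eq_pow_val, hpow, Units.val_one]
  have hb1 : b ≠ 1 := fun h ↦ hne (Units.ext h)
  obtain ⟨ζ, hζ1, hζ⟩ := exists_hasEigenvalue_ne_one_of_pow_eq_one hpK hbp hb1
  have horder : orderOf ζ = p := orderOf_eq_prime (hζ.pow_eq_one_of_pow_eq_one hbp) hζ1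
  have hdvd : p ∣ finrank K (b.eigenspace ζ) :=
    horder ▸ orderOf_dvd_of_pow_eq_one (pow_finrank_eigenspace_commutatorElement_eq_one a s ha hs ζ)
  calc p ≤ finrank K (b.eigenspace ζ) :=
        Nat.le_of_dvd (Nat.pos_of_ne_zero (Submodule.finrank_eq_zero.not.mpr hζ)) hdvd
    _ ≤ finrank K V := Submodule.finrank_le _

end Module.End

theorem Matrix.GeneralLinearGroup.map_injective {n R S : Type*} [DecidableEq n] [Fintype n]
    [CommRing R] [CommRing S] {f : R →+* S} (hf : Function.Injective f) :
    Function.Injective (map (n := n) f) :=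
  fun g h hgh ↦ Units.ext <| Matrix.ext fun i j ↦
    hf <| by rw [← GeneralLinearGroup.map_apply, ← GeneralLinearGroup.map_apply, hgh]

theorem statement18_general (F : Type*) [Field F] (p : ℕ) (hp : p.Prime)
    (hchar : ringChar F ≠ p) (n : ℕ)
    (A S B : Matrix.GeneralLinearGroup (Fin n) F)
    (hB : B = S * A * S⁻¹ * A⁻¹)
    (hBA : B * A = A * B) (hBS : B * S = S * B)
    (hBp : B ^ p = 1) (hB1 : B ≠ 1) :
    p ≤ n := by
  let K := AlgebraicClosure F
  let φ : Matrix.GeneralLinearGroup (Fin n) F →* (End K (Fin n → K))ˣ :=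
    Matrix.GeneralLinearGroup.toLin.toMonoidHom.comp
      (Matrix.GeneralLinearGroup.map (algebraMap F K))
  have hφ : Function.Injective φ :=
    Matrix.GeneralLinearGroup.toLin.injective.comp
      (Matrix.GeneralLinearGroup.map_injective (algebraMap F K).injective)
  have hpF : (p : F) ≠ 0 := fun h ↦
    hchar ((hp.eq_one_or_self_of_dvd _ (ringChar.dvd h)).resolve_left CharP.ringChar_ne_one)
  have hpK : (p : K) ≠ 0 := by simpa using (map_ne_zero (algebraMap F K)).mpr hpF
  rw [← commutatorElement_def] at hB
  subst hB
  have hφB : φ ⁅S, A⁆ = ⁅φ S, φ A⁆ := map_commutatorElement φ S A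
  have key := End.le_finrank_of_commutatorElement_pow_eq_one hp hpK (φ A) (φ S)
    (hφB ▸ Commute.map hBA φ) (hφB ▸ Commute.map hBS φ) (by rw [← hφB, ← map_pow, hBp, map_one])
    (hφB ▸ (map_ne_one_iff φ hφ).mpr hB1)
  simpa using key

theorem statement18 (F : Type*) [Field F] (p : ℕ) (hp : p.Prime)
    (hchar : ringChar F ≠ p) (n : ℕ)
    (A S B : Matrix.GeneralLinearGroup (Fin n) F)
    (hB : B = S * A * S⁻¹ * A⁻¹)
    (hBA : B * A = A * B) (hBS : B * S = S * B)
    (hAp : A ^ p = 1) (hBp : B ^ p = 1) (hB1 : B ≠ 1) :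
    p ≤ n :=
  statement18_general F p hp hchar n A S B hB hBA hBS hBp hB1
end
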